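/- arXiv:math/0603183 — 2 statements merged into one kernel-verified Lean document; each statement's English description precedes it below -/
import Mathlib

section
/- Let f : ℝ^d → ℂ be continuous and rapidly decreasing, i.e. for every q ∈ ℕ there is C_q > 0 with (1+|x|)^q |f(x)| ≤ C_q for all x. Let ρ ∈ 𝒮(ℝ^d) and let α be a multi-index. Then for every q ∈ ℕ there exists a constant C > 0 such that for all ε ∈ (0,1] and all x ∈ ℝ^d, (1+|x|)^q | ∫_{ℝ^d} f(x−y) (∂^α ρ_ε)(y) dy | ≤ C ε^{-|α|}; in particular the exponent of ε does not depend on q. -/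
open Set MeasureTheory

/-- The partial derivative of `f` in the `i`-th coordinate direction. -/
noncomputable def coordPDeriv (d : ℕ) (i : Fin d) (f : EuclideanSpace ℝ (Fin d) → ℂ) :
    EuclideanSpace ℝ (Fin d) → ℂ :=
  fun x => fderiv ℝ f x (EuclideanSpace.single i 1)

/-- The multi-index partial derivative `∂^α f`, where the multi-index `α` is encoded
as the list of coordinate directions in which one differentiates (so `|α| = α.length`). -/
noncomputable def multiPDeriv (d : ℕ) (α : List (Fin d)) (f : EuclideanSpace ℝ (Fin d) → ℂ) :
    EuclideanSpace ℝ (Fin d) → ℂ :=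
  α.foldr (coordPDeriv d) f

/-! Differentiating `ρ_ε = ε^{-d} ρ(·/ε)` along `α` gives `ε^{-|α|} (∂^α ρ)_ε`, so it suffices to
bound `(1+|x|)^q |f ∗ g_ε(x)|` uniformly in `ε ∈ (0,1]` for the Schwartz function `g = ∂^α ρ`.
Peetre's inequality `1+|x| ≤ (1+|x-y|)(1+|y|)` moves the weight onto `g`, and since `|y| ≤ |y/ε|`
the integrand is dominated by `C ε^{-d} w(y/ε)` with `w = (1+|·|)^q |g|` integrable; the change of
variables `y ↦ y/ε` absorbs the factor `ε^{-d}`. -/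

open LineDeriv Module

section Weights

variable {E : Type*} [SeminormedAddCommGroup E]

theorem one_add_norm_le_mul_one_add_norm_sub (x y : E) :
    1 + ‖x‖ ≤ (1 + ‖x - y‖) * (1 + ‖y‖) := by
  have := norm_le_norm_sub_add x y
  nlinarith [norm_nonneg (x - y), norm_nonneg y, mul_nonneg (norm_nonneg (x - y)) (norm_nonneg y)]

theorem one_add_norm_pow_mul_norm_comp_sub_le {F : Type*} [SeminormedAddCommGroup F]
    {f : E → F} {q : ℕ} {C : ℝ} (hf : ∀ x, (1 + ‖x‖) ^ q * ‖f x‖ ≤ C) (x y : E) :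
    (1 + ‖x‖) ^ q * ‖f (x - y)‖ ≤ C * (1 + ‖y‖) ^ q :=
  calc (1 + ‖x‖) ^ q * ‖f (x - y)‖
      ≤ ((1 + ‖x - y‖) * (1 + ‖y‖)) ^ q * ‖f (x - y)‖ := by
        gcongr
        exact one_add_norm_le_mul_one_add_norm_sub x y
    _ = (1 + ‖x - y‖) ^ q * ‖f (x - y)‖ * (1 + ‖y‖) ^ q := by rw [mul_pow]; ring
    _ ≤ C * (1 + ‖y‖) ^ q := by gcongr; exact hf (x - y)

end Weights

theorem SchwartzMap.integrable_one_add_norm_pow_mul {D V : Type*} [NormedAddCommGroup D]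
    [NormedSpace ℝ D] [NormedAddCommGroup V] [NormedSpace ℝ V] [MeasurableSpace D]
    [BorelSpace D] [SecondCountableTopology D] (μ : Measure D) [μ.HasTemperateGrowth]
    (g : SchwartzMap D V) (q : ℕ) :
    Integrable (fun z => (1 + ‖z‖) ^ q * ‖g z‖) μ := by
  refine (((g.integrable_pow_mul μ 0).add (g.integrable_pow_mul μ q)).const_mul
    (2 ^ (q - 1))).mono' (by fun_prop) (ae_of_all _ fun z => ?_)
  rw [Pi.add_apply, Real.norm_of_nonneg (by positivity), pow_zero, one_mul, ← one_add_mul,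
    ← mul_assoc]
  gcongr
  simpa using add_pow_le zero_le_one (norm_nonneg z) q

theorem SchwartzMap.fderiv_const_mul_comp_smul_apply {E : Type*} [NormedAddCommGroup E]
    [NormedSpace ℝ E] (ψ : SchwartzMap E ℂ) (c : ℂ) (e : ℝ) (y v : E) :
    fderiv ℝ (fun z => c * ψ (e • z)) y v = c * e * (∂_{v} ψ) (e • y) := by
  have hcomp : HasFDerivAt (fun z => ψ (e • z)) ((fderiv ℝ ψ (e • y)).comp
      (e • ContinuousLinearMap.id ℝ E)) y :=
    (ψ.differentiableAt.hasFDerivAt).comp y ((hasFDerivAt_id y).const_smul e)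
  rw [(hcomp.const_mul c).fderiv, SchwartzMap.lineDerivOp_apply_eq_fderiv]
  simp [Complex.real_smul, mul_assoc]

theorem multiPDeriv_const_mul_comp_smul (d : ℕ) (α : List (Fin d))
    (ρ : SchwartzMap (EuclideanSpace ℝ (Fin d)) ℂ) (c : ℂ) (e : ℝ) :
    multiPDeriv d α (fun z => c * ρ (e • z)) = fun y =>
      c * (e : ℂ) ^ α.length * (∂^{fun k => EuclideanSpace.single (α.get k) (1 : ℝ)} ρ) (e • y) := by
  induction α with
  | nil => simp [multiPDeriv]
  | cons i α ih =>
    funext y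
    change coordPDeriv d i (multiPDeriv d α _) y = _
    simp only [coordPDeriv, ih, ← mul_assoc, SchwartzMap.fderiv_const_mul_comp_smul_apply,
      iteratedLineDerivOp_succ_left, List.length_cons, pow_succ]
    rfl

theorem one_add_norm_pow_mul_norm_integral_mul_dilate_le {E : Type*} [NormedAddCommGroup E]
    [NormedSpace ℝ E] [FiniteDimensional ℝ E] [MeasurableSpace E] [BorelSpace E]
    (μ : Measure E) [μ.IsAddHaarMeasure] {f g : E → ℂ} {q : ℕ} {C : ℝ}
    (hf : ∀ x, (1 + ‖x‖) ^ q * ‖f x‖ ≤ C)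
    (hg : Integrable (fun z => (1 + ‖z‖) ^ q * ‖g z‖) μ) {ε : ℝ} (hε : ε ∈ Ioc 0 1) (x : E) :
    (1 + ‖x‖) ^ q * ‖∫ y, f (x - y) * ((((ε ^ finrank ℝ E)⁻¹ : ℝ) : ℂ) * g (ε⁻¹ • y)) ∂μ‖ ≤
      C * ∫ z, (1 + ‖z‖) ^ q * ‖g z‖ ∂μ := by
  obtain ⟨hε0, hε1⟩ := hε
  set w : E → ℝ := fun z => (1 + ‖z‖) ^ q * ‖g z‖
  have hnorm_le : ∀ y : E, ‖y‖ ≤ ‖ε⁻¹ • y‖ := fun y => by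
    rw [norm_smul, Real.norm_of_nonneg (by positivity)]
    exact le_mul_of_one_le_left (norm_nonneg y) (one_le_inv₀ hε0 |>.mpr hε1)
  have hpointwise : ∀ y : E,
      (1 + ‖x‖) ^ q * ‖f (x - y) * ((((ε ^ finrank ℝ E)⁻¹ : ℝ) : ℂ) * g (ε⁻¹ • y))‖ ≤
        C * (ε ^ finrank ℝ E)⁻¹ * w (ε⁻¹ • y) := fun y =>
    calc _ = (1 + ‖x‖) ^ q * ‖f (x - y)‖ * ((ε ^ finrank ℝ E)⁻¹ * ‖g (ε⁻¹ • y)‖) := by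
          rw [norm_mul, norm_mul, Complex.norm_real, Real.norm_of_nonneg (by positivity)]; ring
      _ ≤ C * (1 + ‖ε⁻¹ • y‖) ^ q * ((ε ^ finrank ℝ E)⁻¹ * ‖g (ε⁻¹ • y)‖) := by
          refine mul_le_mul_of_nonneg_right ?_ (by positivity)
          refine (one_add_norm_pow_mul_norm_comp_sub_le hf x y).trans ?_
          have hC : 0 ≤ C := (mul_nonneg (by positivity) (norm_nonneg _)).trans (hf 0)
          gcongr
          exact hnorm_le y
      _ = C * (ε ^ finrank ℝ E)⁻¹ * w (ε⁻¹ • y) := by ring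
  have hdilate : ∫ y, w (ε⁻¹ • y) ∂μ = ε ^ finrank ℝ E * ∫ z, w z ∂μ := by
    rw [Measure.integral_comp_inv_smul_of_nonneg μ w hε0.le, smul_eq_mul]
  calc _ ≤ (1 + ‖x‖) ^ q *
        ∫ y, ‖f (x - y) * ((((ε ^ finrank ℝ E)⁻¹ : ℝ) : ℂ) * g (ε⁻¹ • y))‖ ∂μ := by
        gcongr; exact norm_integral_le_integral_norm _
    _ = ∫ y, (1 + ‖x‖) ^ q * ‖f (x - y) * ((((ε ^ finrank ℝ E)⁻¹ : ℝ) : ℂ) * g (ε⁻¹ • y))‖ ∂μ :=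
        (integral_const_mul _ _).symm
    _ ≤ ∫ y, C * (ε ^ finrank ℝ E)⁻¹ * w (ε⁻¹ • y) ∂μ :=
        integral_mono_of_nonneg (ae_of_all _ fun y => by positivity)
          (((integrable_comp_smul_iff μ w (inv_ne_zero hε0.ne')).mpr hg).const_mul _)
          (ae_of_all _ hpointwise)
    _ = C * ∫ z, w z ∂μ := by
        rw [integral_const_mul, hdilate]; field_simp

theorem stmt7_general (d : ℕ) (f : EuclideanSpace ℝ (Fin d) → ℂ)
    (hf_rd : ∀ q : ℕ, ∃ Cq > (0:ℝ), ∀ x, (1 + ‖x‖) ^ q * ‖f x‖ ≤ Cq)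
    (ρ : SchwartzMap (EuclideanSpace ℝ (Fin d)) ℂ) (α : List (Fin d)) :
    ∀ q : ℕ, ∃ C > (0:ℝ), ∀ ε ∈ Ioc (0:ℝ) 1, ∀ x,
      (1 + ‖x‖) ^ q *
        ‖∫ y, f (x - y) * multiPDeriv d α (fun z => (((ε ^ d)⁻¹ : ℝ) : ℂ) * ρ (ε⁻¹ • z)) y‖
        ≤ C * ε ^ (-(α.length : ℝ)) := by
  intro q
  obtain ⟨C, hC, hf⟩ := hf_rd q
  set g := ∂^{fun k => EuclideanSpace.single (α.get k) (1 : ℝ)} ρ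
  set M := ∫ z, (1 + ‖z‖) ^ q * ‖g z‖
  have hM : 0 ≤ M := integral_nonneg fun z => by positivity
  refine ⟨C * (M + 1), by positivity, fun ε hε x => ?_⟩
  have key := one_add_norm_pow_mul_norm_integral_mul_dilate_le volume hf
    (g.integrable_one_add_norm_pow_mul volume q) hε x
  rw [finrank_euclideanSpace_fin] at key
  have hε0 := hε.1.le
  have hrescale : ∫ y, f (x - y) * multiPDeriv d α (fun z => (((ε ^ d)⁻¹ : ℝ) : ℂ) * ρ (ε⁻¹ • z)) y
      = ((ε⁻¹ : ℝ) : ℂ) ^ α.length * ∫ y, f (x - y) * ((((ε ^ d)⁻¹ : ℝ) : ℂ) * g (ε⁻¹ • y)) := by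
    rw [multiPDeriv_const_mul_comp_smul, ← integral_const_mul]
    congr 1 with y
    ring
  rw [hrescale, norm_mul, norm_pow, Complex.norm_real, Real.norm_of_nonneg (by positivity),
    Real.rpow_neg hε0, Real.rpow_natCast, inv_pow]
  calc _ = (ε⁻¹) ^ α.length * ((1 + ‖x‖) ^ q *
        ‖∫ y, f (x - y) * ((((ε ^ d)⁻¹ : ℝ) : ℂ) * g (ε⁻¹ • y))‖) := by ring
    _ ≤ (ε⁻¹) ^ α.length * (C * M) := by gcongr
    _ ≤ C * (M + 1) * (ε ^ α.length)⁻¹ := by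
        rw [inv_pow, mul_comm]; gcongr; linarith

/-- For `f` continuous and rapidly decreasing and `ρ` Schwartz, for every `q` one has
`(1+|x|)^q |(f ∗ ∂^α ρ_ε)(x)| ≤ C ε^{-|α|}` uniformly in `ε ∈ (0,1]` and `x`; the
exponent of `ε` does not depend on `q`. -/
theorem stmt7 (d : ℕ) (f : EuclideanSpace ℝ (Fin d) → ℂ) (hf_cont : Continuous f)
    (hf_rd : ∀ q : ℕ, ∃ Cq > (0:ℝ), ∀ x, (1 + ‖x‖) ^ q * ‖f x‖ ≤ Cq)
    (ρ : SchwartzMap (EuclideanSpace ℝ (Fin d)) ℂ) (α : List (Fin d)) :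
    ∀ q : ℕ, ∃ C > (0:ℝ), ∀ ε ∈ Ioc (0:ℝ) 1, ∀ x,
      (1 + ‖x‖) ^ q *
        ‖∫ y, f (x - y) * multiPDeriv d α (fun z => (((ε ^ d)⁻¹ : ℝ) : ℂ) * ρ (ε⁻¹ • z)) y‖
        ≤ C * ε ^ (-(α.length : ℝ)) :=
  stmt7_general d f hf_rd ρ α
end

section
/- Let (u_ε)_{ε∈(0,1]} be a net of Schwartz functions on ℝ^d for which there exists N ∈ ℕ with μ_{q,l}(u_ε) = O(ε^{-N}) as ε→0 for all (q,l) ∈ ℕ² (a bound uniform in both indices). Then there exists N' ∈ ℕ such that μ_{q,l}(û_ε) = O(ε^{-N'}) as ε→0 for all (q,l) ∈ ℕ². -/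
open Set MeasureTheory

/-- The Fourier transform `û(ξ) = ∫ e^{-i x·ξ} u(x) dx` on `ℝ^d`. -/
noncomputable def ftransform (d : ℕ) (u : EuclideanSpace ℝ (Fin d) → ℂ) :
    EuclideanSpace ℝ (Fin d) → ℂ :=
  fun ξ => ∫ x, Complex.exp (-(Complex.I * ((inner ℝ x ξ : ℝ) : ℂ))) * u x

/-!
The Fourier transform is a continuous linear map of `𝓢(ℝ^d, ℂ)`, so each Schwartz seminorm of `û`
is bounded by a constant times a finite supremum of Schwartz seminorms of `u`. A bound
`O(ε^{-N})` on all seminorms of `u_ε` therefore passes to `û_ε` with the same exponent `N`.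
-/

open SchwartzMap FourierTransform

lemma pow_le_one_add_pow {r : ℝ} (hr : 0 ≤ r) {k q : ℕ} (hkq : k ≤ q) :
    r ^ k ≤ (1 + r) ^ q :=
  calc r ^ k ≤ (1 + r) ^ k := by gcongr; linarith
    _ ≤ (1 + r) ^ q := pow_le_pow_right₀ (by linarith) hkq

section Moderate

variable {E F E' F' : Type*} [NormedAddCommGroup E] [NormedSpace ℝ E]
  [NormedAddCommGroup F] [NormedSpace ℝ F] [NormedAddCommGroup E'] [NormedSpace ℝ E']
  [NormedAddCommGroup F'] [NormedSpace ℝ F']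

/-- `μ_{q,l}(u ε) = O(ε^{-N})` as `ε → 0`, for every `q` and `l`. -/
def IsModerate (N : ℕ) (u : ℝ → 𝓢(E, F)) : Prop :=
  ∀ q l : ℕ, ∃ C > (0:ℝ), ∃ ε₀ ∈ Ioc (0:ℝ) 1, ∀ ε ∈ Ioo (0:ℝ) ε₀,
    ∀ x, ∀ n ≤ l, (1 + ‖x‖) ^ q * ‖iteratedFDeriv ℝ n (u ε) x‖ ≤ C * ε ^ (-(N : ℝ))

lemma IsModerate.sup_seminorm_le {N : ℕ} {u : ℝ → 𝓢(E, F)} (hu : IsModerate N u)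
    (m : ℕ × ℕ) : ∃ C > (0:ℝ), ∃ ε₀ ∈ Ioc (0:ℝ) 1, ∀ ε ∈ Ioo (0:ℝ) ε₀,
      (Finset.Iic m).sup (schwartzSeminormFamily ℝ E F) (u ε) ≤ C * ε ^ (-(N : ℝ)) := by
  obtain ⟨C, hC, ε₀, hε₀, hbound⟩ := hu m.1 m.2
  refine ⟨C, hC, ε₀, hε₀, fun ε hε => ?_⟩
  have hεN : 0 < ε ^ (-(N : ℝ)) := Real.rpow_pos_of_pos hε.1 _
  refine Seminorm.finset_sup_apply_le (by positivity) fun i hi => ?_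
  rw [Finset.mem_Iic] at hi
  refine seminorm_le_bound ℝ i.1 i.2 (u ε) (by positivity) fun x => ?_
  calc ‖x‖ ^ i.1 * ‖iteratedFDeriv ℝ i.2 (u ε) x‖
      ≤ (1 + ‖x‖) ^ m.1 * ‖iteratedFDeriv ℝ i.2 (u ε) x‖ := by
        gcongr; exact pow_le_one_add_pow (norm_nonneg x) hi.1
    _ ≤ C * ε ^ (-(N : ℝ)) := hbound ε hε x i.2 hi.2

lemma isModerate_of_sup_seminorm_le {N : ℕ} {u : ℝ → 𝓢(E, F)}
    (hu : ∀ m : ℕ × ℕ, ∃ C > (0:ℝ), ∃ ε₀ ∈ Ioc (0:ℝ) 1, ∀ ε ∈ Ioo (0:ℝ) ε₀,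
      (Finset.Iic m).sup (schwartzSeminormFamily ℝ E F) (u ε) ≤ C * ε ^ (-(N : ℝ))) :
    IsModerate N u := by
  intro q l
  obtain ⟨C, hC, ε₀, hε₀, hbound⟩ := hu (q, l)
  refine ⟨2 ^ q * C, by positivity, ε₀, hε₀, fun ε hε x n hn => ?_⟩
  calc (1 + ‖x‖) ^ q * ‖iteratedFDeriv ℝ n (u ε) x‖
      ≤ 2 ^ q * (Finset.Iic (q, l)).sup (schwartzSeminormFamily ℝ E F) (u ε) :=
        one_add_le_sup_seminorm_apply (𝕜 := ℝ) (m := (q, l)) le_rfl hn _ x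
    _ ≤ 2 ^ q * C * ε ^ (-(N : ℝ)) := by rw [mul_assoc]; gcongr; exact hbound ε hε

lemma ContinuousLinearMap.exists_sup_seminorm_comp_le (T : 𝓢(E, F) →L[ℝ] 𝓢(E', F'))
    (m : ℕ × ℕ) : ∃ m' : ℕ × ℕ, ∃ C : ℝ, 0 < C ∧ ∀ f,
      (Finset.Iic m).sup (schwartzSeminormFamily ℝ E' F') (T f)
        ≤ C * (Finset.Iic m').sup (schwartzSeminormFamily ℝ E F) f := by
  let p := ((Finset.Iic m).sup (schwartzSeminormFamily ℝ E' F')).comp T.toLinearMap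
  have hp : Continuous p := (Seminorm.continuous_finsetSup fun i _ =>
    (schwartz_withSeminorms ℝ E' F').continuous_seminorm i).comp T.continuous
  obtain ⟨s, C, hC, hle⟩ := Seminorm.bound_of_continuous (schwartz_withSeminorms ℝ E F) p hp
  have hs : s ⊆ Finset.Iic (s.sup id) := fun i hi => Finset.mem_Iic.2 (Finset.le_sup (f := id) hi)
  refine ⟨s.sup id, C, NNReal.coe_pos.2 (pos_iff_ne_zero.2 hC), fun f => ?_⟩
  calc p f ≤ C * s.sup (schwartzSeminormFamily ℝ E F) f := hle f
    _ ≤ C * (Finset.Iic (s.sup id)).sup (schwartzSeminormFamily ℝ E F) f := by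
      gcongr; exact Seminorm.le_def.1 (Finset.sup_mono hs) f

lemma IsModerate.map {N : ℕ} {u : ℝ → 𝓢(E, F)} (hu : IsModerate N u)
    (T : 𝓢(E, F) →L[ℝ] 𝓢(E', F')) : IsModerate N (fun ε => T (u ε)) := by
  refine isModerate_of_sup_seminorm_le fun m => ?_
  obtain ⟨m', C, hC, hT⟩ := T.exists_sup_seminorm_comp_le m
  obtain ⟨C₁, hC₁, ε₀, hε₀, hbound⟩ := hu.sup_seminorm_le m'
  refine ⟨C * C₁, by positivity, ε₀, hε₀, fun ε hε => ?_⟩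
  calc _ ≤ C * (Finset.Iic m').sup (schwartzSeminormFamily ℝ E F) (u ε) := hT (u ε)
    _ ≤ C * C₁ * ε ^ (-(N : ℝ)) := by rw [mul_assoc]; gcongr; exact hbound ε hε

end Moderate

section Fourier

variable (d : ℕ)

/-- Mathlib's `𝓕` has the kernel `e^{-2πi⟪x, ξ⟫}`. -/
lemma ftransform_eq_fourier_comp_smul (u : EuclideanSpace ℝ (Fin d) → ℂ)
    (ξ : EuclideanSpace ℝ (Fin d)) : ftransform d u ξ = 𝓕 u ((2 * Real.pi)⁻¹ • ξ) := by
  rw [Real.fourier_eq', ftransform]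
  congr 1 with x
  have h2π : -2 * Real.pi * (2 * Real.pi)⁻¹ = -1 := by field_simp
  rw [real_inner_smul_right, smul_eq_mul, ← mul_assoc, h2π]
  push_cast
  ring_nf

noncomputable def ftransformCLM :
    𝓢(EuclideanSpace ℝ (Fin d), ℂ) →L[ℝ] 𝓢(EuclideanSpace ℝ (Fin d), ℂ) :=
  (compCLMOfContinuousLinearEquiv ℝ (LinearEquiv.smulOfNeZero ℝ _ _
    (inv_ne_zero Real.two_pi_pos.ne')).toContinuousLinearEquiv).comp (fourierTransformCLM ℝ)

lemma coe_ftransformCLM (u : 𝓢(EuclideanSpace ℝ (Fin d), ℂ)) :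
    ⇑(ftransformCLM d u) = ftransform d u :=
  funext fun ξ => (ftransform_eq_fourier_comp_smul d u ξ).symm

end Fourier

/-- Regularity theorem for the Fourier transform: uniform moderate bounds
`μ_{q,l}(u_ε) = O(ε^{-N})` are transformed into uniform moderate bounds for `û_ε`. -/
theorem stmt12 (d : ℕ) (u : ℝ → SchwartzMap (EuclideanSpace ℝ (Fin d)) ℂ)
    (hu : ∃ N : ℕ, ∀ q l : ℕ, ∃ C > (0:ℝ), ∃ ε₀ ∈ Ioc (0:ℝ) 1, ∀ ε ∈ Ioo (0:ℝ) ε₀,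
      ∀ x, ∀ n ≤ l, (1 + ‖x‖) ^ q * ‖iteratedFDeriv ℝ n (⇑(u ε)) x‖ ≤ C * ε ^ (-(N : ℝ))) :
    ∃ N' : ℕ, ∀ q l : ℕ, ∃ C > (0:ℝ), ∃ ε₀ ∈ Ioc (0:ℝ) 1, ∀ ε ∈ Ioo (0:ℝ) ε₀,
      ∀ ξ, ∀ n ≤ l,
        (1 + ‖ξ‖) ^ q * ‖iteratedFDeriv ℝ n (ftransform d (⇑(u ε))) ξ‖
          ≤ C * ε ^ (-(N' : ℝ)) := by
  obtain ⟨N, hN⟩ := hu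
  refine ⟨N, ?_⟩
  simpa only [IsModerate, coe_ftransformCLM] using IsModerate.map (u := u) hN (ftransformCLM d)
end
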